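/- arXiv:2004.09127 — 4 statements merged into one kernel-verified Lean document; each statement's English description precedes it below -/
import Mathlib

section
/- (POD error formula) For every 0 ≤ l ≤ d_p, the mean squared POD approximation error of the snapshots equals the sum of the discarded eigenvalues: (1/M) Σ_{j=1}^M ‖u_j − Σ_{k=1}^l ⟨u_j, ψ_k⟩ ψ_k‖² = Σ_{k=l+1}^{d_p} λ_k. -/
open scoped RealInnerProductSpace
open Finset

/-- POD error formula: the mean squared POD approximation error of the snapshots
equals the sum of the discarded eigenvalues. -/
theorem pod_error_formula
    {X : Type*} [NormedAddCommGroup X] [InnerProductSpace ℝ X]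
    (M : ℕ) (hM : 1 ≤ M) (u : Fin M → X)
    (K : Matrix (Fin M) (Fin M) ℝ)
    (hK : ∀ i j, K i j = (1 / (M : ℝ)) * ⟪u i, u j⟫)
    (v : Fin M → Fin M → ℝ)
    (hvON : ∀ k l, ∑ j, v k j * v l j = if k = l then (1 : ℝ) else 0)
    (lam : Fin M → ℝ)
    (heig : ∀ k, K.mulVec (v k) = lam k • v k)
    (hmono : ∀ k l : Fin M, k ≤ l → lam l ≤ lam k)
    (hnonneg : ∀ k, 0 ≤ lam k)
    (dp : ℕ) (hdpM : dp ≤ M)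
    (hpos : ∀ k : Fin M, (k : ℕ) < dp → 0 < lam k)
    (hzero : ∀ k : Fin M, dp ≤ (k : ℕ) → lam k = 0)
    (ψ : Fin M → X)
    (hψ : ∀ k : Fin M, ψ k =
      (Real.sqrt M * Real.sqrt (lam k))⁻¹ • ∑ j, v k j • u j)
    (l : ℕ) (hl : l ≤ dp) :
    (1 / (M : ℝ)) * ∑ j, ‖u j -
        ∑ k ∈ univ.filter (fun k : Fin M => (k : ℕ) < l), ⟪u j, ψ k⟫ • ψ k‖ ^ 2
      = ∑ k ∈ univ.filter (fun k : Fin M => l ≤ (k : ℕ) ∧ (k : ℕ) < dp), lam k := by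
  have hM0 : (0:ℝ) < M := by exact_mod_cast hM
  have hMne : (M:ℝ) ≠ 0 := ne_of_gt hM0
  have hsqM : Real.sqrt M * Real.sqrt M = (M:ℝ) := Real.mul_self_sqrt (le_of_lt hM0)
  have hsqMne : Real.sqrt M ≠ 0 := by positivity
  -- inner products of snapshots in terms of K
  have huu : ∀ i j, ⟪u i, u j⟫ = (M:ℝ) * K i j := by
    intro i j; rw [hK i j]; field_simp
  -- eigenvalue equation componentwise
  have hKv : ∀ (k j : Fin M), ∑ i, K j i * v k i = lam k * v k j := by
    intro k j
    have := congrFun (heig k) j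
    simpa [Matrix.mulVec, dotProduct, Pi.smul_apply, smul_eq_mul] using this
  -- column orthonormality
  have hVVt : (Matrix.of v) * (Matrix.of v).transpose = 1 := by
    ext k l
    simpa [Matrix.mul_apply, Matrix.one_apply] using hvON k l
  have hVtV := mul_eq_one_comm.mp hVVt
  have hcol : ∀ i j : Fin M, ∑ k, v k i * v k j = if i = j then (1:ℝ) else 0 := by
    intro i j
    have := congrFun (congrFun hVtV i) j
    simpa [Matrix.mul_apply, Matrix.transpose_apply, Matrix.one_apply] using this
  -- inner product of a snapshot with a POD mode
  have hinner_uψ : ∀ (j k : Fin M), (k:ℕ) < dp →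
      ⟪u j, ψ k⟫ = Real.sqrt M * Real.sqrt (lam k) * v k j := by
    intro j k hk
    have hlk := hpos k hk
    have hsqL : Real.sqrt (lam k) * Real.sqrt (lam k) = lam k :=
      Real.mul_self_sqrt (le_of_lt hlk)
    have hsqLne : Real.sqrt (lam k) ≠ 0 := by positivity
    rw [hψ k, real_inner_smul_right, inner_sum]
    have h1 : ∀ i, ⟪u j, v k i • u i⟫ = v k i * ((M:ℝ) * K j i) := by
      intro i; rw [real_inner_smul_right, huu j i]
    rw [Finset.sum_congr rfl (fun i _ => h1 i)]
    have h2 : ∑ i, v k i * ((M:ℝ) * K j i) = (M:ℝ) * (lam k * v k j) := by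
      rw [← hKv k j, Finset.mul_sum]
      exact Finset.sum_congr rfl (fun i _ => by ring)
    rw [h2, inv_mul_eq_div, div_eq_iff (by positivity : Real.sqrt M * Real.sqrt (lam k) ≠ 0)]
    linear_combination (-(lam k * v k j)) * hsqM +
      (-(Real.sqrt M * Real.sqrt M * v k j)) * hsqL
  -- orthonormality of POD modes (for indices < dp)
  have hψψ : ∀ k k' : Fin M, (k:ℕ) < dp → (k':ℕ) < dp →
      ⟪ψ k, ψ k'⟫ = if k = k' then (1:ℝ) else 0 := by
    intro k k' hk hk'
    have hlk := hpos k hk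
    have hsqL : Real.sqrt (lam k) * Real.sqrt (lam k) = lam k :=
      Real.mul_self_sqrt (le_of_lt hlk)
    have hsqLne : Real.sqrt (lam k) ≠ 0 := by positivity
    rw [hψ k, real_inner_smul_left, sum_inner]
    have h1 : ∀ i, ⟪v k i • u i, ψ k'⟫
        = Real.sqrt M * Real.sqrt (lam k') * (v k i * v k' i) := by
      intro i
      rw [real_inner_smul_left, hinner_uψ i k' hk']
      ring
    rw [Finset.sum_congr rfl (fun i _ => h1 i), ← Finset.mul_sum, hvON k k']
    by_cases hkk : k = k'
    · subst hkk
      simp only [if_pos rfl, if_true, mul_one]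
      have hne : Real.sqrt M * Real.sqrt (lam k) ≠ 0 := by positivity
      exact inv_mul_cancel₀ hne
    · simp [hkk]
  -- per-snapshot error
  set F : Finset (Fin M) := univ.filter (fun k : Fin M => (k : ℕ) < l) with hF
  have hFdp : ∀ k ∈ F, (k:ℕ) < dp := by
    intro k hk
    simp only [hF, mem_filter] at hk
    omega
  have hperj : ∀ j : Fin M,
      ‖u j - ∑ k ∈ F, ⟪u j, ψ k⟫ • ψ k‖ ^ 2
        = ‖u j‖ ^ 2 - ∑ k ∈ F, ⟪u j, ψ k⟫ ^ 2 := by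
    intro j
    rw [norm_sub_sq_real]
    have hA : ⟪u j, ∑ k ∈ F, ⟪u j, ψ k⟫ • ψ k⟫ = ∑ k ∈ F, ⟪u j, ψ k⟫ ^ 2 := by
      rw [inner_sum]
      refine Finset.sum_congr rfl (fun k _ => ?_)
      rw [real_inner_smul_right]; ring
    have hterm : ∀ k ∈ F,
        ⟪(⟪u j, ψ k⟫ : ℝ) • ψ k, ∑ k' ∈ F, ⟪u j, ψ k'⟫ • ψ k'⟫ = ⟪u j, ψ k⟫ ^ 2 := by
      intro k hk
      rw [real_inner_smul_left, inner_sum]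
      have h2 : ∀ k' ∈ F, (⟪u j, ψ k'⟫ : ℝ) * ⟪ψ k, ψ k'⟫
          = if k = k' then ⟪u j, ψ k⟫ else 0 := by
        intro k' hk'
        rw [hψψ k k' (hFdp k hk) (hFdp k' hk')]
        by_cases h : k = k' <;> simp [h]
      have h3 : ∀ k' ∈ F, ⟪ψ k, (⟪u j, ψ k'⟫ : ℝ) • ψ k'⟫
          = if k = k' then ⟪u j, ψ k⟫ else 0 := by
        intro k' hk'
        rw [real_inner_smul_right, h2 k' hk']
      rw [Finset.sum_congr rfl h3, Finset.sum_ite_eq F k (fun _ => (⟪u j, ψ k⟫ : ℝ)),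
        if_pos hk]
      ring
    have hB : ‖∑ k ∈ F, ⟪u j, ψ k⟫ • ψ k‖ ^ 2 = ∑ k ∈ F, ⟪u j, ψ k⟫ ^ 2 := by
      rw [← real_inner_self_eq_norm_sq, sum_inner, Finset.sum_congr rfl hterm]
    rw [hA, hB]; ring
  -- trace identity
  have htrace : ∑ k, lam k = ∑ j, K j j := by
    have step : ∀ k : Fin M, lam k = ∑ j, ∑ i, K j i * v k i * v k j := by
      intro k
      have h0 : ∑ j, (lam k * v k j) * v k j = lam k := by
        have he : ∀ j ∈ univ, (lam k * v k j) * v k j = lam k * (v k j * v k j) :=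
          fun j _ => by ring
        rw [Finset.sum_congr rfl he, ← Finset.mul_sum, hvON k k]; simp
      rw [← h0]
      refine Finset.sum_congr rfl (fun j _ => ?_)
      rw [← hKv k j, Finset.sum_mul]
    calc ∑ k, lam k = ∑ k, ∑ j, ∑ i, K j i * v k i * v k j :=
          Finset.sum_congr rfl (fun k _ => step k)
      _ = ∑ j, ∑ i, K j i * ∑ k, v k i * v k j := by
          rw [Finset.sum_comm]
          refine Finset.sum_congr rfl (fun j _ => ?_)
          rw [Finset.sum_comm]
          refine Finset.sum_congr rfl (fun i _ => ?_)
          rw [Finset.mul_sum]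
          exact Finset.sum_congr rfl (fun k _ => by ring)
      _ = ∑ j, K j j := by
          refine Finset.sum_congr rfl (fun j _ => ?_)
          rw [Finset.sum_congr rfl (fun i _ => by rw [hcol i j])]
          simp only [mul_ite, mul_one, mul_zero, Finset.sum_ite_eq', mem_univ, if_true]
  -- sum of eigenvalues restricted to < dp
  have hsplit : ∑ k : Fin M, lam k
      = ∑ k ∈ univ.filter (fun k : Fin M => (k:ℕ) < dp), lam k := by
    rw [← Finset.sum_filter_add_sum_filter_not univ (fun k : Fin M => (k:ℕ) < dp) lam]
    have hz : ∑ k ∈ univ.filter (fun k : Fin M => ¬ (k:ℕ) < dp), lam k = 0 :=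
      Finset.sum_eq_zero (fun k hk => hzero k (by simp only [mem_filter] at hk; omega))
    rw [hz, add_zero]
  -- sum over snapshots of coefficients squared
  have hsum_c : ∀ k : Fin M, (k:ℕ) < dp →
      ∑ j, (⟪u j, ψ k⟫ : ℝ) ^ 2 = (M:ℝ) * lam k := by
    intro k hk
    have hsqL : Real.sqrt (lam k) * Real.sqrt (lam k) = lam k :=
      Real.mul_self_sqrt (hnonneg k)
    rw [Finset.sum_congr rfl (fun j _ => by rw [hinner_uψ j k hk])]
    have he : ∀ j ∈ univ, (Real.sqrt M * Real.sqrt (lam k) * v k j) ^ 2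
        = (M:ℝ) * lam k * (v k j * v k j) := by
      intro j _
      linear_combination (Real.sqrt (lam k) * Real.sqrt (lam k) * v k j ^ 2) * hsqM
        + ((M:ℝ) * v k j ^ 2) * hsqL
    rw [Finset.sum_congr rfl he, ← Finset.mul_sum, hvON k k]; simp
  -- snapshot norms
  have hnorm : ∑ j, ‖u j‖ ^ 2 = (M:ℝ) * ∑ j, K j j := by
    rw [Finset.mul_sum]
    refine Finset.sum_congr rfl (fun j _ => ?_)
    rw [← real_inner_self_eq_norm_sq, huu j j]
  -- assemble
  set D : Finset (Fin M) := univ.filter (fun k : Fin M => (k:ℕ) < dp) with hD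
  have hFD : F ⊆ D := by
    intro k hk
    simp only [hF, mem_filter] at hk
    simp only [hD, mem_filter]
    exact ⟨hk.1, by omega⟩
  have hDF : D \ F = univ.filter (fun k : Fin M => l ≤ (k:ℕ) ∧ (k:ℕ) < dp) := by
    ext k
    simp only [hD, hF, mem_sdiff, mem_filter, mem_univ, true_and]
    omega
  have hmain : ∑ j, ‖u j - ∑ k ∈ F, ⟪u j, ψ k⟫ • ψ k‖ ^ 2
      = (M:ℝ) * (∑ k ∈ D, lam k - ∑ k ∈ F, lam k) := by
    rw [Finset.sum_congr rfl (fun j _ => hperj j), Finset.sum_sub_distrib, hnorm,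
      htrace.symm, hsplit]
    rw [Finset.sum_comm]
    have hc : ∑ k ∈ F, ∑ j, (⟪u j, ψ k⟫ : ℝ) ^ 2 = (M:ℝ) * ∑ k ∈ F, lam k := by
      rw [Finset.mul_sum]
      exact Finset.sum_congr rfl (fun k hk => hsum_c k (hFdp k hk))
    rw [hc]
    ring
  rw [hmain, ← hDF, Finset.sum_sdiff_eq_sub hFD]
  field_simp
end

section
/- (Pointwise POD projection error) For every 0 ≤ l < d_p and every 1 ≤ j ≤ M, ‖u_j − P_l u_j‖² = M Σ_{k=l+1}^{d_p} λ_k (v_k^j)², and consequently ‖u_j − P_l u_j‖ ≤ √M √λ_{l+1}. -/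
/-! The unnormalised modes `S k = ∑ᵢ v k i • u i` satisfy `⟪S k, S m⟫ = M λ_m δ_km`, because `v m`
is an eigenvector of the Gram matrix `M K`; and since the `v k` form an orthonormal basis, the
transform inverts to `u j = ∑ₖ v k j • S k`. As `span {ψ_k : k < l} = span {S_k : k < l}`, the
orthogonal projection keeps exactly the terms with `k < l`: the residual is `∑_{k ≥ l} v k j • S k`
and Pythagoras gives its norm, where the terms with `k ≥ d_p` vanish. The bound follows from
`λ_k ≤ λ_l` for `k ≥ l` and `∑ₖ (v k j)² = 1`. -/

open scoped RealInnerProductSpace Matrix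
open Finset

section OrthogonalExpansion

variable {X : Type*} [NormedAddCommGroup X] [InnerProductSpace ℝ X] {ι : Type*}

theorem Submodule.span_image_smul_eq {e : ι → X} {s : Set ι} {a : ι → ℝ}
    (ha : ∀ k ∈ s, a k ≠ 0) :
    Submodule.span ℝ ((fun k => a k • e k) '' s) = Submodule.span ℝ (e '' s) := by
  apply le_antisymm <;> rw [Submodule.span_le] <;> rintro _ ⟨k, hk, rfl⟩
  · exact Submodule.smul_mem _ _ (Submodule.subset_span ⟨k, hk, rfl⟩)
  · exact (Submodule.smul_mem_iff _ (ha k hk)).mp (Submodule.subset_span ⟨k, hk, rfl⟩)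

theorem sub_eq_of_mem_of_mem_orthogonal {W : Submodule ℝ X} {x p t : X} (hp : p ∈ W)
    (hpo : x - p ∈ Wᗮ) (ht : x - t ∈ W) (hto : t ∈ Wᗮ) : x - p = t := by
  have hW : x - t - p ∈ W := W.sub_mem ht hp
  have hWo : x - p - t ∈ Wᗮ := Wᗮ.sub_mem hpo hto
  rw [← sub_eq_zero]
  refine Submodule.disjoint_def.mp W.orthogonal_disjoint _ ?_ hWo
  rwa [sub_right_comm]

theorem norm_sum_smul_sq_of_pairwise_inner_eq_zero {e : ι → X}
    (he : Pairwise fun k m => ⟪e k, e m⟫ = 0) (T : Finset ι) (c : ι → ℝ) :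
    ‖∑ k ∈ T, c k • e k‖ ^ 2 = ∑ k ∈ T, c k ^ 2 * ‖e k‖ ^ 2 := by
  rw [← real_inner_self_eq_norm_sq, sum_inner]
  refine sum_congr rfl fun k hk => ?_
  rw [inner_sum, sum_eq_single k]
  · rw [real_inner_smul_left, real_inner_smul_right, real_inner_self_eq_norm_sq]
    ring
  · intro m _ hmk
    rw [real_inner_smul_left, real_inner_smul_right, he hmk.symm, mul_zero, mul_zero]
  · exact fun hk' => absurd hk hk'

theorem sum_smul_sub_eq_sum_filter_not_mem [Fintype ι] {e : ι → X}
    (he : Pairwise fun k m => ⟪e k, e m⟫ = 0) (s : Set ι) [DecidablePred (· ∈ s)]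
    {c : ι → ℝ} {x p : X} (hx : ∑ k, c k • e k = x) (hp : p ∈ Submodule.span ℝ (e '' s))
    (hpo : ∀ w ∈ Submodule.span ℝ (e '' s), ⟪x - p, w⟫ = 0) :
    x - p = ∑ k with k ∉ s, c k • e k := by
  have hortho : Submodule.span ℝ (e '' sᶜ) ⟂ Submodule.span ℝ (e '' s) := by
    rw [Submodule.isOrtho_span]
    rintro _ ⟨k, hk, rfl⟩ _ ⟨m, hm, rfl⟩
    exact he (ne_of_mem_of_not_mem hm hk).symm
  refine sub_eq_of_mem_of_mem_orthogonal hp ((Submodule.mem_orthogonal' _ _).mpr hpo) ?_ ?_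
  · rw [← hx, ← sum_filter_add_sum_filter_not univ (· ∈ s), add_sub_cancel_right]
    exact Submodule.sum_mem _ fun k hk =>
      Submodule.smul_mem _ _ (Submodule.subset_span ⟨k, (mem_filter.mp hk).2, rfl⟩)
  · exact hortho <| Submodule.sum_mem _ fun k hk =>
      Submodule.smul_mem _ _ (Submodule.subset_span ⟨k, (mem_filter.mp hk).2, rfl⟩)

theorem sum_mul_sq_le_of_le [Fintype ι] {T : Finset ι} {a w : ι → ℝ} {b : ℝ} (hb : 0 ≤ b)
    (ha : ∀ k ∈ T, a k ≤ b) (hw : ∑ k, w k ^ 2 = 1) : ∑ k ∈ T, a k * w k ^ 2 ≤ b :=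
  calc ∑ k ∈ T, a k * w k ^ 2
      ≤ ∑ k ∈ T, b * w k ^ 2 :=
        sum_le_sum fun k hk => mul_le_mul_of_nonneg_right (ha k hk) (sq_nonneg _)
    _ = b * ∑ k ∈ T, w k ^ 2 := (mul_sum _ _ _).symm
    _ ≤ b * ∑ k, w k ^ 2 := mul_le_mul_of_nonneg_left
        (sum_le_sum_of_subset_of_nonneg (subset_univ _) fun _ _ _ => sq_nonneg _) hb
    _ = b := by rw [hw, mul_one]

end OrthogonalExpansion

namespace Matrix

variable {X : Type*} [NormedAddCommGroup X] [InnerProductSpace ℝ X]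
  {ι : Type*} [Fintype ι] [DecidableEq ι] {V : Matrix ι ι ℝ}

theorem of_mul_transpose_eq_one {v : ι → ι → ℝ}
    (hv : ∀ k m, ∑ j, v k j * v m j = if k = m then 1 else 0) : of v * (of v)ᵀ = 1 := by
  ext k m
  simpa [mul_apply, one_apply] using hv k m

theorem sum_mul_of_mul_transpose_eq_one (hV : V * Vᵀ = 1) (i j : ι) :
    ∑ k, V k i * V k j = if i = j then 1 else 0 := by
  have hVt : Vᵀ * V = 1 := mul_eq_one_comm.mp hV
  simpa [mul_apply, one_apply] using congrFun (congrFun hVt i) j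

theorem sum_smul_sum_smul_of_mul_transpose_eq_one (hV : V * Vᵀ = 1) (u : ι → X) (j : ι) :
    ∑ k, V k j • ∑ i, V k i • u i = u j := by
  simp_rw [Finset.smul_sum, smul_smul]
  rw [Finset.sum_comm]
  simp_rw [← Finset.sum_smul, sum_mul_of_mul_transpose_eq_one hV, ite_smul, one_smul, zero_smul,
    Finset.sum_ite_eq, if_pos (Finset.mem_univ _)]

theorem inner_sum_smul_sum_smul_of_gram_mulVec {u : ι → X} {μ : ι → ℝ} (hV : V * Vᵀ = 1)
    (heig : ∀ k, gram ℝ u *ᵥ V k = μ k • V k) (k m : ι) :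
    ⟪∑ i, V k i • u i, ∑ i, V m i • u i⟫ = if k = m then μ m else 0 := by
  have hrow : V k ⬝ᵥ V m = if k = m then 1 else 0 := by
    simpa [mul_apply, one_apply, dotProduct] using congrFun (congrFun hV k) m
  rw [← star_dotProduct_gram_mulVec, star_trivial, heig, dotProduct_smul, hrow, smul_eq_mul,
    mul_ite, mul_one, mul_zero]

end Matrix

section POD

variable {X : Type*} [NormedAddCommGroup X] [InnerProductSpace ℝ X] {M : ℕ}

/-- `podMode u v k = √M √λ_k ψ_k`. -/
def podMode (u : Fin M → X) (v : Fin M → Fin M → ℝ) (k : Fin M) : X := ∑ i, v k i • u i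

theorem inner_podMode {u : Fin M → X} {K : Matrix (Fin M) (Fin M) ℝ}
    (hK : ∀ i j, K i j = (1 / (M : ℝ)) * ⟪u i, u j⟫) {v : Fin M → Fin M → ℝ}
    (hv : ∀ k m, ∑ j, v k j * v m j = if k = m then 1 else 0) {lam : Fin M → ℝ}
    (heig : ∀ k, K *ᵥ v k = lam k • v k) (k m : Fin M) :
    ⟪podMode u v k, podMode u v m⟫ = if k = m then M * lam m else 0 := by
  have hM : (M : ℝ) ≠ 0 := Nat.cast_ne_zero.mpr k.pos.ne'
  have hGK : Matrix.gram ℝ u = (M : ℝ) • K := by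
    ext i i'
    rw [Matrix.gram_apply, Matrix.smul_apply, hK, smul_eq_mul, ← mul_assoc,
      mul_one_div_cancel hM, one_mul]
  have hgram (k : Fin M) : Matrix.gram ℝ u *ᵥ v k = (M * lam k) • v k := by
    rw [hGK, Matrix.smul_mulVec, heig, smul_smul]
  exact Matrix.inner_sum_smul_sum_smul_of_gram_mulVec (Matrix.of_mul_transpose_eq_one hv) hgram
    k m

theorem sum_filter_not_lt_eq_sum_filter_of_eq_zero {f : Fin M → ℝ} {l dp : ℕ}
    (hf : ∀ k : Fin M, dp ≤ (k : ℕ) → f k = 0) :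
    ∑ k ∈ univ.filter (· ∉ {k : Fin M | (k : ℕ) < l}), f k =
      ∑ k ∈ univ.filter (fun k : Fin M => l ≤ (k : ℕ) ∧ (k : ℕ) < dp), f k := by
  refine (sum_subset (fun k hk => ?_) fun k hk hkF => ?_).symm
  · simp only [mem_filter, mem_univ, true_and, Set.mem_ofPred_eq, not_lt] at hk ⊢
    exact hk.1
  · simp only [mem_filter, mem_univ, true_and, Set.mem_ofPred_eq, not_lt, not_and] at hk hkF
    exact hf k (hkF hk)

end POD

theorem pod_pointwise_projection_error_general
    {X : Type*} [NormedAddCommGroup X] [InnerProductSpace ℝ X]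
    (M : ℕ) (u : Fin M → X)
    (K : Matrix (Fin M) (Fin M) ℝ)
    (hK : ∀ i j, K i j = (1 / (M : ℝ)) * ⟪u i, u j⟫)
    (v : Fin M → Fin M → ℝ)
    (hvON : ∀ k l, ∑ j, v k j * v l j = if k = l then (1 : ℝ) else 0)
    (lam : Fin M → ℝ)
    (heig : ∀ k, K.mulVec (v k) = lam k • v k)
    (hmono : ∀ k l : Fin M, k ≤ l → lam l ≤ lam k)
    (dp : ℕ) (hdpM : dp ≤ M)
    (hpos : ∀ k : Fin M, (k : ℕ) < dp → 0 < lam k)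
    (hzero : ∀ k : Fin M, dp ≤ (k : ℕ) → lam k = 0)
    (ψ : Fin M → X)
    (hψ : ∀ k : Fin M, ψ k =
      (Real.sqrt M * Real.sqrt (lam k))⁻¹ • ∑ j, v k j • u j)
    (l : ℕ) (hl : l < dp) (P : X → X)
    (hPmem : ∀ x, P x ∈ Submodule.span ℝ (ψ '' {k : Fin M | (k : ℕ) < l}))
    (hPorth : ∀ x, ∀ w ∈ Submodule.span ℝ (ψ '' {k : Fin M | (k : ℕ) < l}),
      ⟪x - P x, w⟫ = 0) :
    ∀ j : Fin M,
      ‖u j - P (u j)‖ ^ 2 =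
        (M : ℝ) * ∑ k ∈ univ.filter (fun k : Fin M => l ≤ (k : ℕ) ∧ (k : ℕ) < dp),
          lam k * (v k j) ^ 2 ∧
      ‖u j - P (u j)‖ ≤ Real.sqrt M * Real.sqrt (lam ⟨l, lt_of_lt_of_le hl hdpM⟩) := by
  intro j
  have hM : (0 : ℝ) < M := Nat.cast_pos.mpr j.pos
  have hV := Matrix.of_mul_transpose_eq_one hvON
  have hS := inner_podMode hK hvON heig
  have hSorth : Pairwise fun k m => ⟪podMode u v k, podMode u v m⟫ = 0 := fun k m hkm =>
    (hS k m).trans (if_neg hkm)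
  have hspan : Submodule.span ℝ (ψ '' {k : Fin M | (k : ℕ) < l}) =
      Submodule.span ℝ (podMode u v '' {k : Fin M | (k : ℕ) < l}) := by
    rw [Set.image_congr fun k _ => hψ k]
    refine Submodule.span_image_smul_eq fun k hk => ?_
    have := hpos k (lt_trans hk hl)
    positivity
  have hres : u j - P (u j) =
      ∑ k ∈ univ.filter (· ∉ {k : Fin M | (k : ℕ) < l}), v k j • podMode u v k := by
    rw [hspan] at hPmem hPorth
    exact sum_smul_sub_eq_sum_filter_not_mem hSorth _
      (Matrix.sum_smul_sum_smul_of_mul_transpose_eq_one hV u j) (hPmem _) (hPorth _)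
  set F := univ.filter (fun k : Fin M => l ≤ (k : ℕ) ∧ (k : ℕ) < dp)
  have hnorm : ‖u j - P (u j)‖ ^ 2 = M * ∑ k ∈ F, lam k * v k j ^ 2 := by
    rw [hres, norm_sum_smul_sq_of_pairwise_inner_eq_zero hSorth, mul_sum,
      ← sum_filter_not_lt_eq_sum_filter_of_eq_zero fun k hk => by
        rw [hzero k hk, zero_mul, mul_zero]]
    exact sum_congr rfl fun k _ => by rw [← real_inner_self_eq_norm_sq, hS, if_pos rfl]; ring
  refine ⟨hnorm, ?_⟩
  have hcol : ∑ k, v k j ^ 2 = 1 := by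
    simpa [sq] using Matrix.sum_mul_of_mul_transpose_eq_one hV j j
  have hsum : ∑ k ∈ F, lam k * v k j ^ 2 ≤ lam ⟨l, lt_of_lt_of_le hl hdpM⟩ :=
    sum_mul_sq_le_of_le (hpos _ hl).le (fun k hk => hmono _ k (mem_filter.mp hk).2.1) hcol
  rw [← Real.sqrt_mul hM.le, Real.le_sqrt (norm_nonneg _) (mul_nonneg hM.le (hpos _ hl).le),
    hnorm]
  exact mul_le_mul_of_nonneg_left hsum hM.le

/-- Pointwise POD projection error:
`‖u j − P l (u j)‖² = M Σ_{l < k ≤ dp} λ k (v k j)²` and `‖u j − P l (u j)‖ ≤ √M √(λ (l+1))`. -/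
theorem pod_pointwise_projection_error
    {X : Type*} [NormedAddCommGroup X] [InnerProductSpace ℝ X]
    (M : ℕ) (hM : 1 ≤ M) (u : Fin M → X)
    (K : Matrix (Fin M) (Fin M) ℝ)
    (hK : ∀ i j, K i j = (1 / (M : ℝ)) * ⟪u i, u j⟫)
    (v : Fin M → Fin M → ℝ)
    (hvON : ∀ k l, ∑ j, v k j * v l j = if k = l then (1 : ℝ) else 0)
    (lam : Fin M → ℝ)
    (heig : ∀ k, K.mulVec (v k) = lam k • v k)
    (hmono : ∀ k l : Fin M, k ≤ l → lam l ≤ lam k)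
    (hnonneg : ∀ k, 0 ≤ lam k)
    (dp : ℕ) (hdpM : dp ≤ M)
    (hpos : ∀ k : Fin M, (k : ℕ) < dp → 0 < lam k)
    (hzero : ∀ k : Fin M, dp ≤ (k : ℕ) → lam k = 0)
    (ψ : Fin M → X)
    (hψ : ∀ k : Fin M, ψ k =
      (Real.sqrt M * Real.sqrt (lam k))⁻¹ • ∑ j, v k j • u j)
    (l : ℕ) (hl : l < dp) (P : X → X)
    (hPmem : ∀ x, P x ∈ Submodule.span ℝ (ψ '' {k : Fin M | (k : ℕ) < l}))
    (hPorth : ∀ x, ∀ w ∈ Submodule.span ℝ (ψ '' {k : Fin M | (k : ℕ) < l}),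
      ⟪x - P x, w⟫ = 0) :
    ∀ j : Fin M,
      ‖u j - P (u j)‖ ^ 2 =
        (M : ℝ) * ∑ k ∈ univ.filter (fun k : Fin M => l ≤ (k : ℕ) ∧ (k : ℕ) < dp),
          lam k * (v k j) ^ 2 ∧
      ‖u j - P (u j)‖ ≤ Real.sqrt M * Real.sqrt (lam ⟨l, lt_of_lt_of_le hl hdpM⟩) :=
  pod_pointwise_projection_error_general M u K hK v hvON lam heig hmono dp hdpM hpos hzero ψ hψ l hl
    P hPmem hPorth
end

section
/- (POD inverse inequality) Let Y be a real inner product space and G : X → Y a linear map. Define the matrix S ∈ ℝ^{d_p×d_p} by S_{ij} = ⟨G ψ_i, G ψ_j⟩ and let ‖S‖₂ denote its spectral norm. Then for every v in span{ψ_1, …, ψ_{d_p}}, ‖G v‖ ≤ √‖S‖₂ · ‖v‖. -/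
open scoped RealInnerProductSpace

/-!
The first `d_p` POD modes are orthonormal: the coefficient vectors `v_k` are eigenvectors of the
Gram matrix `M K` of the snapshots, so `⟨Σ v_k^j u_j, Σ v_l^j u_j⟩ = M λ_l δ_kl`, and the factor
`(√M √λ_k)⁻¹` normalises. For `w = Σ c_i ψ_i` orthonormality gives `‖w‖² = c ⬝ c`, while
`‖G w‖² = c ⬝ S c` because `S` is the Gram matrix of the `G ψ_i`; the quadratic form of `S` is
bounded by `‖S‖₂ c ⬝ c`.
-/

namespace Matrix

variable {ι E : Type*} [Fintype ι] [NormedAddCommGroup E] [InnerProductSpace ℝ E]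

theorem dotProduct_mulVec_le_norm_toEuclideanCLM_mul [DecidableEq ι] (A : Matrix ι ι ℝ)
    (x : ι → ℝ) : x ⬝ᵥ A *ᵥ x ≤ ‖toEuclideanCLM (𝕜 := ℝ) A‖ * (x ⬝ᵥ x) := by
  set y : EuclideanSpace ℝ ι := WithLp.toLp 2 x
  have hy : ‖y‖ ^ 2 = x ⬝ᵥ x := by
    rw [← real_inner_self_eq_norm_sq, EuclideanSpace.inner_eq_star_dotProduct]
    simp [y]
  calc x ⬝ᵥ A *ᵥ x = ⟪y, toEuclideanCLM (𝕜 := ℝ) A y⟫ := (inner_toEuclideanCLM A y y).symm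
    _ ≤ ‖y‖ * (‖toEuclideanCLM (𝕜 := ℝ) A‖ * ‖y‖) :=
      (real_inner_le_norm _ _).trans (by gcongr; exact ContinuousLinearMap.le_opNorm _ _)
    _ = ‖toEuclideanCLM (𝕜 := ℝ) A‖ * (x ⬝ᵥ x) := by rw [← hy]; ring

theorem inner_sum_smul_eq_of_gram_mulVec_eq {u : ι → E} {y : ι → ℝ} {μ : ℝ}
    (hy : gram ℝ u *ᵥ y = μ • y) (a : ι → ℝ) :
    ⟪∑ j, a j • u j, ∑ j, y j • u j⟫ = μ * (a ⬝ᵥ y) := by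
  rw [← star_dotProduct_gram_mulVec, hy, dotProduct_smul, star_trivial, smul_eq_mul]

end Matrix

open Matrix

section

variable {ι E F : Type*} [Fintype ι] [NormedAddCommGroup E] [InnerProductSpace ℝ E]
  [NormedAddCommGroup F] [InnerProductSpace ℝ F]

theorem Orthonormal.norm_map_le_sqrt_norm_gram_mul [DecidableEq ι] {b : ι → E}
    (hb : Orthonormal ℝ b) (G : E →ₗ[ℝ] F) {w : E} (hw : w ∈ Submodule.span ℝ (Set.range b)) :
    ‖G w‖ ≤ √‖toEuclideanCLM (𝕜 := ℝ) (gram ℝ (G ∘ b))‖ * ‖w‖ := by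
  obtain ⟨c, rfl⟩ := (Submodule.mem_span_range_iff_exists_fun ℝ).mp hw
  have hnorm : ‖∑ i, c i • b i‖ ^ 2 = c ⬝ᵥ c := by
    rw [← real_inner_self_eq_norm_sq, ← star_dotProduct_gram_mulVec,
      gram_eq_one_iff_orthonormal.mpr hb, one_mulVec, star_trivial]
  have hnorm_map : ‖G (∑ i, c i • b i)‖ ^ 2 = c ⬝ᵥ gram ℝ (G ∘ b) *ᵥ c := by
    rw [← real_inner_self_eq_norm_sq, ← star_trivial c, star_dotProduct_gram_mulVec]
    simp
  rw [← Real.sqrt_sq (norm_nonneg (G _)), ← Real.sqrt_sq (norm_nonneg (∑ i, c i • b i)),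
    ← Real.sqrt_mul (norm_nonneg _)]
  gcongr
  rw [hnorm_map, hnorm]
  exact dotProduct_mulVec_le_norm_toEuclideanCLM_mul _ c

theorem orthonormal_inv_sqrt_smul_sum_of_gram_eigenvectors [DecidableEq ι] {κ : Type*}
    {u : ι → E} {v : ι → ι → ℝ} {μ : ι → ℝ}
    (hv : ∀ k l, v k ⬝ᵥ v l = if k = l then 1 else 0) (heig : ∀ k, gram ℝ u *ᵥ v k = μ k • v k)
    {f : κ → ι} (hf : Function.Injective f) (hpos : ∀ i, 0 < μ (f i)) :
    Orthonormal ℝ fun i ↦ (√(μ (f i)))⁻¹ • ∑ j, v (f i) j • u j := by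
  classical
  rw [orthonormal_iff_ite]
  intro i j
  rw [real_inner_smul_left, real_inner_smul_right, inner_sum_smul_eq_of_gram_mulVec_eq (heig _),
    hv]
  by_cases hij : i = j
  · subst hij
    have hsq := Real.mul_self_sqrt (hpos i).le
    have hne := (Real.sqrt_pos.mpr (hpos i)).ne'
    rw [if_pos rfl, if_pos rfl]
    field_simp
    linarith
  · simp [hij, hf.ne hij]

end

theorem pod_inverse_inequality_general
    {X : Type*} [NormedAddCommGroup X] [InnerProductSpace ℝ X]
    (M : ℕ) (u : Fin M → X)
    (K : Matrix (Fin M) (Fin M) ℝ)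
    (hK : ∀ i j, K i j = (1 / (M : ℝ)) * ⟪u i, u j⟫)
    (v : Fin M → Fin M → ℝ)
    (hvON : ∀ k l, ∑ j, v k j * v l j = if k = l then (1 : ℝ) else 0)
    (lam : Fin M → ℝ)
    (heig : ∀ k, K.mulVec (v k) = lam k • v k)
    (dp : ℕ) (hdpM : dp ≤ M)
    (hpos : ∀ k : Fin M, (k : ℕ) < dp → 0 < lam k)
    (ψ : Fin M → X)
    (hψ : ∀ k : Fin M, ψ k =
      (Real.sqrt M * Real.sqrt (lam k))⁻¹ • ∑ j, v k j • u j)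
    {Y : Type*} [NormedAddCommGroup Y] [InnerProductSpace ℝ Y]
    (G : X →ₗ[ℝ] Y)
    (S : Matrix (Fin dp) (Fin dp) ℝ)
    (hS : ∀ i j : Fin dp, S i j = ⟪G (ψ (Fin.castLE hdpM i)), G (ψ (Fin.castLE hdpM j))⟫) :
    ∀ w ∈ Submodule.span ℝ (ψ '' {k : Fin M | (k : ℕ) < dp}),
      ‖G w‖ ≤ Real.sqrt ‖Matrix.toEuclideanCLM (𝕜 := ℝ) S‖ * ‖w‖ := by
  intro w hw
  have hgram : gram ℝ u = (M : ℝ) • K := by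
    ext i j
    have : (M : ℝ) ≠ 0 := Nat.cast_ne_zero.mpr i.pos.ne'
    simp [hK, gram_apply, this]
  have hmodes : Orthonormal ℝ (ψ ∘ Fin.castLE hdpM) := by
    convert orthonormal_inv_sqrt_smul_sum_of_gram_eigenvectors (μ := fun k ↦ M * lam k) hvON
      (fun k ↦ by rw [hgram, smul_mulVec, heig, smul_smul]) (Fin.castLE_injective hdpM)
      (fun i ↦ mul_pos (Nat.cast_pos.mpr (i.castLE hdpM).pos) (hpos _ i.is_lt)) using 2 with i
    rw [Function.comp_apply, hψ, Real.sqrt_mul (Nat.cast_nonneg M)]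
  rw [← Fin.range_castLE hdpM, ← Set.range_comp] at hw
  rw [show S = gram ℝ (G ∘ ψ ∘ Fin.castLE hdpM) from Matrix.ext hS]
  exact hmodes.norm_map_le_sqrt_norm_gram_mul G hw

/-- POD inverse inequality: for `v` in the span of the POD modes,
`‖G v‖ ≤ √‖S‖₂ ‖v‖` where `S` is the matrix of inner products of the `G ψ k`. -/
theorem pod_inverse_inequality
    {X : Type*} [NormedAddCommGroup X] [InnerProductSpace ℝ X]
    (M : ℕ) (hM : 1 ≤ M) (u : Fin M → X)
    (K : Matrix (Fin M) (Fin M) ℝ)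
    (hK : ∀ i j, K i j = (1 / (M : ℝ)) * ⟪u i, u j⟫)
    (v : Fin M → Fin M → ℝ)
    (hvON : ∀ k l, ∑ j, v k j * v l j = if k = l then (1 : ℝ) else 0)
    (lam : Fin M → ℝ)
    (heig : ∀ k, K.mulVec (v k) = lam k • v k)
    (hmono : ∀ k l : Fin M, k ≤ l → lam l ≤ lam k)
    (hnonneg : ∀ k, 0 ≤ lam k)
    (dp : ℕ) (hdpM : dp ≤ M)
    (hpos : ∀ k : Fin M, (k : ℕ) < dp → 0 < lam k)
    (hzero : ∀ k : Fin M, dp ≤ (k : ℕ) → lam k = 0)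
    (ψ : Fin M → X)
    (hψ : ∀ k : Fin M, ψ k =
      (Real.sqrt M * Real.sqrt (lam k))⁻¹ • ∑ j, v k j • u j)
    {Y : Type*} [NormedAddCommGroup Y] [InnerProductSpace ℝ Y]
    (G : X →ₗ[ℝ] Y)
    (S : Matrix (Fin dp) (Fin dp) ℝ)
    (hS : ∀ i j : Fin dp, S i j = ⟪G (ψ (Fin.castLE hdpM i)), G (ψ (Fin.castLE hdpM j))⟫) :
    ∀ w ∈ Submodule.span ℝ (ψ '' {k : Fin M | (k : ℕ) < dp}),
      ‖G w‖ ≤ Real.sqrt ‖Matrix.toEuclideanCLM (𝕜 := ℝ) S‖ * ‖w‖ :=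
  pod_inverse_inequality_general M u K hK v hvON lam heig dp hdpM hpos ψ hψ G S hS
end

section
/- Let Y be a real inner product space and G : X → Y a linear map, and suppose there is a constant C ≥ 0 such that ‖G v‖ ≤ C ‖v‖ for all v in span{u_1, …, u_M}. Then for every 0 ≤ l ≤ d_p, (1/M) Σ_{j=1}^M ‖G(u_j − P_l u_j)‖² ≤ C² Σ_{k=l+1}^{d_p} λ_k. -/
open scoped RealInnerProductSpace Matrix
open Finset

/-!
The rows `v k` are orthonormal eigenvectors of `K`, so `trace K = ∑ λ k`, while
`M · trace K = ∑ ‖u j‖²`. Moreover `⟪u j, ψ k⟫ = √(M λ k) v k j`, so the modes with `λ k > 0` are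
orthonormal and `∑ j ⟪u j, ψ k⟫² = M λ k`. Hence the truncated expansion `∑_{k < l} ⟪u j, ψ k⟫ ψ k`
has total squared error `M ∑_{k ≥ l} λ k`, and the eigenvalues beyond `dp` vanish. The projection
`P u j` approximates `u j` at least as well, and the residual lies in the span of the snapshots,
where `G` is bounded by `C`.
-/

theorem Matrix.trace_eq_sum_of_mul_transpose_eq_one {n : Type*} [Fintype n] [DecidableEq n]
    {K V : Matrix n n ℝ} (hV : V * Vᵀ = 1) {lam : n → ℝ} (heig : ∀ k, K *ᵥ V k = lam k • V k) :
    K.trace = ∑ k, lam k := by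
  have hKV : K * Vᵀ = Vᵀ * Matrix.diagonal lam := by
    ext i k
    rw [Matrix.mul_diagonal]
    simpa [Matrix.mul_apply, Matrix.mulVec, dotProduct, mul_comm] using congrFun (heig k) i
  calc K.trace = (K * Vᵀ * V).trace := by
        rw [Matrix.mul_assoc, mul_eq_one_comm.mp hV, Matrix.mul_one]
    _ = (Matrix.diagonal lam * (V * Vᵀ)).trace := by
        rw [hKV, Matrix.mul_assoc, Matrix.trace_mul_comm, Matrix.mul_assoc]
    _ = ∑ k, lam k := by rw [hV, Matrix.mul_one, Matrix.trace_diagonal]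

section InnerProductSpace

variable {X : Type*} [NormedAddCommGroup X] [InnerProductSpace ℝ X]

theorem norm_sub_le_of_forall_inner_eq_zero {U : Submodule ℝ X} {x p y : X} (hp : p ∈ U)
    (hy : y ∈ U) (horth : ∀ w ∈ U, ⟪x - p, w⟫ = 0) : ‖x - p‖ ≤ ‖x - y‖ := by
  rw [(U.norm_eq_iInf_iff_real_inner_eq_zero (u := x) hp).2 horth]
  exact ciInf_le ⟨0, by rintro _ ⟨w, rfl⟩; exact norm_nonneg _⟩ (⟨y, hy⟩ : (U : Set X))

theorem norm_map_sub_sq_le {Y : Type*} [NormedAddCommGroup Y] [InnerProductSpace ℝ Y]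
    {G : X →ₗ[ℝ] Y} {C : ℝ} {W U : Submodule ℝ X} (hGC : ∀ w ∈ W, ‖G w‖ ≤ C * ‖w‖) (hUW : U ≤ W)
    {x p y : X} (hx : x ∈ W) (hp : p ∈ U) (hy : y ∈ U) (horth : ∀ w ∈ U, ⟪x - p, w⟫ = 0) :
    ‖G (x - p)‖ ^ 2 ≤ C ^ 2 * ‖x - y‖ ^ 2 :=
  calc ‖G (x - p)‖ ^ 2 ≤ C ^ 2 * ‖x - p‖ ^ 2 := by
        rw [← mul_pow]
        exact pow_le_pow_left₀ (norm_nonneg _) (hGC _ (W.sub_mem hx (hUW hp))) 2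
    _ ≤ C ^ 2 * ‖x - y‖ ^ 2 := by
        gcongr
        exact norm_sub_le_of_forall_inner_eq_zero hp hy horth

theorem norm_sub_sum_inner_smul_sq {ι : Type*} [DecidableEq ι] {e : ι → X} {s : Finset ι}
    (he : ∀ i ∈ s, ∀ k ∈ s, ⟪e i, e k⟫ = if i = k then 1 else 0) (x : X) :
    ‖x - ∑ i ∈ s, ⟪x, e i⟫ • e i‖ ^ 2 = ‖x‖ ^ 2 - ∑ i ∈ s, ⟪x, e i⟫ ^ 2 := by
  have hinner : ⟪x, ∑ i ∈ s, ⟪x, e i⟫ • e i⟫ = ∑ i ∈ s, ⟪x, e i⟫ ^ 2 := by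
    simp only [inner_sum, real_inner_smul_right, sq]
  have hnorm : ‖∑ i ∈ s, ⟪x, e i⟫ • e i‖ ^ 2 = ∑ i ∈ s, ⟪x, e i⟫ ^ 2 := by
    rw [← real_inner_self_eq_norm_sq, sum_inner]
    refine sum_congr rfl fun i hi => ?_
    simp only [real_inner_smul_left, inner_sum, real_inner_smul_right]
    rw [sum_congr rfl fun k hk => by rw [he i hi k hk]]
    simp [hi, sq]
  rw [norm_sub_sq_real, hinner, hnorm]
  ring

end InnerProductSpace

section POD

variable {X : Type*} [NormedAddCommGroup X] [InnerProductSpace ℝ X] {M : ℕ} {u : Fin M → X}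
  {K : Matrix (Fin M) (Fin M) ℝ}

theorem inner_sum_smul_eq_mulVec (hK : ∀ i j, K i j = (1 / (M : ℝ)) * ⟪u i, u j⟫)
    (a : Fin M → ℝ) (j : Fin M) : ⟪u j, ∑ i, a i • u i⟫ = M * (K *ᵥ a) j := by
  have hM : (M : ℝ) ≠ 0 := by have := j.pos; positivity
  simp only [inner_sum, real_inner_smul_right, Matrix.mulVec, dotProduct, hK, mul_sum]
  refine sum_congr rfl fun i _ => ?_
  field_simp

theorem sum_norm_sq_eq_mul_trace (hK : ∀ i j, K i j = (1 / (M : ℝ)) * ⟪u i, u j⟫) :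
    ∑ j, ‖u j‖ ^ 2 = M * K.trace := by
  rw [Matrix.trace, mul_sum]
  refine sum_congr rfl fun j _ => ?_
  have hM : (M : ℝ) ≠ 0 := by have := j.pos; positivity
  rw [Matrix.diag_apply, hK, real_inner_self_eq_norm_sq]
  field_simp

theorem inner_pod_mode (hK : ∀ i j, K i j = (1 / (M : ℝ)) * ⟪u i, u j⟫) {a : Fin M → ℝ} {μ : ℝ}
    (ha : K *ᵥ a = μ • a) (j : Fin M) :
    ⟪u j, (√M * √μ)⁻¹ • ∑ i, a i • u i⟫ = √M * √μ * a j := by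
  rw [real_inner_smul_right, inner_sum_smul_eq_mulVec hK, ha, Pi.smul_apply, smul_eq_mul,
    ← Real.sqrt_mul (Nat.cast_nonneg M)]
  calc (√(M * μ))⁻¹ * (M * (μ * a j)) = (M * μ) / √(M * μ) * a j := by ring
    _ = √(M * μ) * a j := by rw [Real.div_sqrt]

theorem span_image_pod_modes_le {ψ : Fin M → X} {c : Fin M → ℝ} {a : Fin M → Fin M → ℝ}
    (hψ : ∀ k, ψ k = c k • ∑ j, a k j • u j) (t : Set (Fin M)) :
    Submodule.span ℝ (ψ '' t) ≤ Submodule.span ℝ (Set.range u) := by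
  refine Submodule.span_le.2 ?_
  rintro _ ⟨k, -, rfl⟩
  rw [hψ]
  exact Submodule.smul_mem _ _ (Submodule.sum_mem _ fun j _ =>
    Submodule.smul_mem _ _ (Submodule.subset_span ⟨j, rfl⟩))

variable {v : Matrix (Fin M) (Fin M) ℝ} {lam : Fin M → ℝ} {ψ : Fin M → X}

theorem inner_pod_modes (hK : ∀ i j, K i j = (1 / (M : ℝ)) * ⟪u i, u j⟫) (hv : v * vᵀ = 1)
    (heig : ∀ k, K *ᵥ v k = lam k • v k)
    (hψ : ∀ k, ψ k = (√M * √(lam k))⁻¹ • ∑ j, v k j • u j) {k : Fin M} (hk : 0 < lam k)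
    (m : Fin M) : ⟪ψ k, ψ m⟫ = if k = m then 1 else 0 := by
  have hs : √M * √(lam k) ≠ 0 := by have := k.pos; positivity
  calc ⟪ψ k, ψ m⟫ = (√M * √(lam k))⁻¹ * ∑ i, v k i * ⟪u i, ψ m⟫ := by
        simp only [hψ k, real_inner_smul_left, sum_inner]
    _ = (√M * √(lam k))⁻¹ * (√M * √(lam m)) * (v * vᵀ) k m := by
        simp only [hψ m, inner_pod_mode hK (heig m), Matrix.mul_apply, Matrix.transpose_apply,
          mul_sum, mul_assoc, mul_left_comm (v k _)]
    _ = if k = m then 1 else 0 := by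
        rw [hv, Matrix.one_apply]
        split_ifs with hkm
        · rw [← hkm, mul_one, inv_mul_cancel₀ hs]
        · simp

theorem sum_norm_sq_sub_pod_expansion (hK : ∀ i j, K i j = (1 / (M : ℝ)) * ⟪u i, u j⟫)
    (hv : v * vᵀ = 1) (heig : ∀ k, K *ᵥ v k = lam k • v k)
    (hψ : ∀ k, ψ k = (√M * √(lam k))⁻¹ • ∑ j, v k j • u j) {s : Finset (Fin M)}
    (hs : ∀ k ∈ s, 0 < lam k) :
    ∑ j, ‖u j - ∑ k ∈ s, ⟪u j, ψ k⟫ • ψ k‖ ^ 2 = M * ∑ k ∈ sᶜ, lam k := by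
  have horth : ∀ i ∈ s, ∀ k ∈ s, ⟪ψ i, ψ k⟫ = if i = k then 1 else 0 :=
    fun i hi k _ => inner_pod_modes hK hv heig hψ (hs i hi) k
  have hcoef : ∀ k ∈ s, ∑ j, ⟪u j, ψ k⟫ ^ 2 = M * lam k := fun k hk => by
    have hvk : ∑ j, v k j ^ 2 = 1 := by
      simpa [Matrix.mul_apply, sq] using congrFun (congrFun hv k) k
    simp only [hψ k, inner_pod_mode hK (heig k), mul_pow, Real.sq_sqrt (Nat.cast_nonneg M),
      Real.sq_sqrt (hs k hk).le, ← mul_sum, hvk, mul_one]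
  calc ∑ j, ‖u j - ∑ k ∈ s, ⟪u j, ψ k⟫ • ψ k‖ ^ 2
      = ∑ j, ‖u j‖ ^ 2 - ∑ k ∈ s, ∑ j, ⟪u j, ψ k⟫ ^ 2 := by
        rw [sum_comm, ← sum_sub_distrib]
        exact sum_congr rfl fun j _ => norm_sub_sum_inner_smul_sq horth (u j)
    _ = M * ∑ k, lam k - ∑ k ∈ s, M * lam k := by
        rw [sum_norm_sq_eq_mul_trace hK, Matrix.trace_eq_sum_of_mul_transpose_eq_one hv heig,
          sum_congr rfl hcoef]
    _ = M * ∑ k ∈ sᶜ, lam k := by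
        rw [← mul_sum, ← mul_sub, ← sum_compl_add_sum s, add_sub_cancel_right]

end POD

theorem pod_bounded_map_projection_error_general
    {X : Type*} [NormedAddCommGroup X] [InnerProductSpace ℝ X]
    (M : ℕ) (u : Fin M → X)
    (K : Matrix (Fin M) (Fin M) ℝ)
    (hK : ∀ i j, K i j = (1 / (M : ℝ)) * ⟪u i, u j⟫)
    (v : Fin M → Fin M → ℝ)
    (hvON : ∀ k l, ∑ j, v k j * v l j = if k = l then (1 : ℝ) else 0)
    (lam : Fin M → ℝ)
    (heig : ∀ k, K.mulVec (v k) = lam k • v k)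
    (dp : ℕ)
    (hpos : ∀ k : Fin M, (k : ℕ) < dp → 0 < lam k)
    (hzero : ∀ k : Fin M, dp ≤ (k : ℕ) → lam k = 0)
    (ψ : Fin M → X)
    (hψ : ∀ k : Fin M, ψ k =
      (Real.sqrt M * Real.sqrt (lam k))⁻¹ • ∑ j, v k j • u j)
    {Y : Type*} [NormedAddCommGroup Y] [InnerProductSpace ℝ Y]
    (G : X →ₗ[ℝ] Y)
    (C : ℝ)
    (hGC : ∀ w ∈ Submodule.span ℝ (Set.range u), ‖G w‖ ≤ C * ‖w‖)
    (l : ℕ) (hl : l ≤ dp) (P : X → X)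
    (hPmem : ∀ x, P x ∈ Submodule.span ℝ (ψ '' {k : Fin M | (k : ℕ) < l}))
    (hPorth : ∀ x, ∀ w ∈ Submodule.span ℝ (ψ '' {k : Fin M | (k : ℕ) < l}),
      ⟪x - P x, w⟫ = 0) :
    (1 / (M : ℝ)) * ∑ j, ‖G (u j - P (u j))‖ ^ 2
      ≤ C ^ 2 * ∑ k ∈ univ.filter (fun k : Fin M => l ≤ (k : ℕ) ∧ (k : ℕ) < dp), lam k := by
  obtain rfl | hM := M.eq_zero_or_pos
  · simp
  set s := univ.filter fun k : Fin M => (k : ℕ) < l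
  have hv : Matrix.of v * (Matrix.of v)ᵀ = 1 := by
    ext k m
    simpa [Matrix.mul_apply, Matrix.one_apply] using hvON k m
  have hresidual : ∀ j, ‖G (u j - P (u j))‖ ^ 2
      ≤ C ^ 2 * ‖u j - ∑ k ∈ s, ⟪u j, ψ k⟫ • ψ k‖ ^ 2 := fun j =>
    norm_map_sub_sq_le hGC (span_image_pod_modes_le hψ _) (Submodule.subset_span ⟨j, rfl⟩)
      (hPmem (u j)) (Submodule.sum_mem _ fun k hk => Submodule.smul_mem _ _
        (Submodule.subset_span ⟨k, (mem_filter.1 hk).2, rfl⟩)) (hPorth (u j))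
  have herror := sum_norm_sq_sub_pod_expansion hK hv heig hψ (s := s)
    fun k hk => hpos k ((mem_filter.1 hk).2.trans_le hl)
  have htail : ∑ k ∈ sᶜ, lam k
      = ∑ k ∈ univ.filter (fun k : Fin M => l ≤ (k : ℕ) ∧ (k : ℕ) < dp), lam k := by
    rw [← filter_filter, sum_filter_of_ne fun k _ hk => not_le.1 fun hdp => hk (hzero k hdp)]
    simp only [s, compl_filter, not_lt]
  calc (1 / (M : ℝ)) * ∑ j, ‖G (u j - P (u j))‖ ^ 2
      ≤ (1 / (M : ℝ)) * (C ^ 2 * ∑ j, ‖u j - ∑ k ∈ s, ⟪u j, ψ k⟫ • ψ k‖ ^ 2) := by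
        gcongr; rw [mul_sum]; exact sum_le_sum fun j _ => hresidual j
    _ = C ^ 2 * ∑ k ∈ univ.filter (fun k : Fin M => l ≤ (k : ℕ) ∧ (k : ℕ) < dp), lam k := by
        rw [herror, htail]; field_simp

/-- If `G` is bounded by `C` on the span of the snapshots, then the mean squared
`G`-error of the POD projection is bounded by `C² Σ_{l < k ≤ dp} λ_k`. -/
theorem pod_bounded_map_projection_error
    {X : Type*} [NormedAddCommGroup X] [InnerProductSpace ℝ X]
    (M : ℕ) (hM : 1 ≤ M) (u : Fin M → X)
    (K : Matrix (Fin M) (Fin M) ℝ)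
    (hK : ∀ i j, K i j = (1 / (M : ℝ)) * ⟪u i, u j⟫)
    (v : Fin M → Fin M → ℝ)
    (hvON : ∀ k l, ∑ j, v k j * v l j = if k = l then (1 : ℝ) else 0)
    (lam : Fin M → ℝ)
    (heig : ∀ k, K.mulVec (v k) = lam k • v k)
    (hmono : ∀ k l : Fin M, k ≤ l → lam l ≤ lam k)
    (hnonneg : ∀ k, 0 ≤ lam k)
    (dp : ℕ) (hdpM : dp ≤ M)
    (hpos : ∀ k : Fin M, (k : ℕ) < dp → 0 < lam k)
    (hzero : ∀ k : Fin M, dp ≤ (k : ℕ) → lam k = 0)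
    (ψ : Fin M → X)
    (hψ : ∀ k : Fin M, ψ k =
      (Real.sqrt M * Real.sqrt (lam k))⁻¹ • ∑ j, v k j • u j)
    {Y : Type*} [NormedAddCommGroup Y] [InnerProductSpace ℝ Y]
    (G : X →ₗ[ℝ] Y)
    (C : ℝ) (hC : 0 ≤ C)
    (hGC : ∀ w ∈ Submodule.span ℝ (Set.range u), ‖G w‖ ≤ C * ‖w‖)
    (l : ℕ) (hl : l ≤ dp) (P : X → X)
    (hPmem : ∀ x, P x ∈ Submodule.span ℝ (ψ '' {k : Fin M | (k : ℕ) < l}))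
    (hPorth : ∀ x, ∀ w ∈ Submodule.span ℝ (ψ '' {k : Fin M | (k : ℕ) < l}),
      ⟪x - P x, w⟫ = 0) :
    (1 / (M : ℝ)) * ∑ j, ‖G (u j - P (u j))‖ ^ 2
      ≤ C ^ 2 * ∑ k ∈ univ.filter (fun k : Fin M => l ≤ (k : ℕ) ∧ (k : ℕ) < dp), lam k :=
  pod_bounded_map_projection_error_general M u K hK v hvON lam heig dp hpos hzero ψ hψ G C hGC l hl
    P hPmem hPorth
end
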